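/- arXiv:1008.3691 — 2 statements merged into one kernel-verified Lean document; each statement's English description precedes it below -/
import Mathlib

section
/- For all positive integers r, w, t with r ≥ 2, w ≤ r and t ≥ r + w, it holds that N((r,w),t) ≥ C(r+w−2, r−1) · N((2,1), t−r−w+3) + C(r+w−3, r) + C(r+w−3, r−3), where C(·,·) denotes the binomial coefficient (equal to 0 when the lower index is negative or exceeds the upper index). -/
/-- `B : Fin t → Finset (Fin n)` is an (r,w;d)-cover-free family: for any disjoint
index sets `L, M` with `|L| = r`, `|M| = w`, the intersection of the blocks in `L`
has at least `d` elements outside the union of the blocks in `M`. -/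
def IsCFF (r w d n t : ℕ) (B : Fin t → Finset (Fin n)) : Prop :=
  ∀ L M : Finset (Fin t), Disjoint L M → L.card = r → M.card = w →
    d ≤ ((L.inf B) \ (M.sup B)).card

/-- `Ncff r w d t` = `N((r,w;d),t)`, the minimum number of points of an
(r,w;d)-CFF with `t` blocks, with the convention that it equals 1 if `r = 0` or `w = 0`. -/
noncomputable def Ncff (r w d t : ℕ) : ℕ :=
  if r = 0 ∨ w = 0 then 1
  else sInf {n : ℕ | ∃ B : Fin t → Finset (Fin n), IsCFF r w d n t B}

/-! Deleting the last block of an optimal `(r+1, w+1)`-CFF on `t+1` blocks and sorting the points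
by membership in that block yields an `(r, w+1)`-CFF and an `(r+1, w)`-CFF on `t` blocks, so
`N(r, w+1, t) + N(r+1, w, t) ≤ N(r+1, w+1, t+1)`. Each of the three terms of the bound obeys
Pascal's rule in `(r, w)`, so an induction on `r + w` starting from `N((2,1), ·)` proves it; on the
diagonal `w = r` the recursion is closed with the symmetry `N(r, w) = N(w, r)` given by
complementing all blocks. -/

open Finset

/-- Cover-free families with points in a finite subset `S` of an arbitrary type; `IsCFF r w 1 n t`
is the case `S = univ` over `Fin n` (`isCFF_one_iff`). -/
def IsCFFOn {α : Type*} {t : ℕ} (r w : ℕ) (S : Finset α) (B : Fin t → Finset α) : Prop :=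
  ∀ L M : Finset (Fin t), Disjoint L M → #L = r → #M = w →
    ∃ x ∈ S, (∀ i ∈ L, x ∈ B i) ∧ ∀ j ∈ M, x ∉ B j

section

variable {α : Type*} {r w t : ℕ} {S : Finset α} {B : Fin t → Finset α}

lemma isCFF_one_iff {n : ℕ} {B : Fin t → Finset (Fin n)} :
    IsCFF r w 1 n t B ↔ IsCFFOn r w univ B := by
  simp [IsCFF, IsCFFOn, Finset.Nonempty, mem_inf]

lemma exists_disjoint_card_eq (h : r + w ≤ t) :
    ∃ L M : Finset (Fin t), Disjoint L M ∧ #L = r ∧ #M = w := by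
  obtain ⟨L, -, hL⟩ := exists_subset_card_eq (s := (univ : Finset (Fin t))) (n := r)
    (by rw [card_univ, Fintype.card_fin]; omega)
  obtain ⟨M, hM, hMw⟩ := exists_subset_card_eq (s := univ \ L) (n := w)
    (by rw [card_sdiff_of_subset (subset_univ L), card_univ, Fintype.card_fin]; omega)
  exact ⟨L, M, disjoint_of_subset_right hM disjoint_sdiff, hL, hMw⟩

lemma IsCFFOn.nonempty (hB : IsCFFOn r w S B) (h : r + w ≤ t) : S.Nonempty := by
  obtain ⟨L, M, hLM, hL, hM⟩ := exists_disjoint_card_eq h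
  obtain ⟨x, hx, -⟩ := hB L M hLM hL hM
  exact ⟨x, hx⟩

lemma IsCFFOn.exists_isCFF (hB : IsCFFOn r w S B) :
    ∃ B' : Fin t → Finset (Fin #S), IsCFF r w 1 #S t B' := by
  classical
  refine ⟨fun i => univ.filter fun k => (S.equivFin.symm k : α) ∈ B i, isCFF_one_iff.2 ?_⟩
  intro L M hLM hL hM
  obtain ⟨x, hx, hxL, hxM⟩ := hB L M hLM hL hM
  exact ⟨S.equivFin ⟨x, hx⟩, mem_univ _, by simpa using hxL, by simpa using hxM⟩

lemma Ncff_le_card (h : r + w ≤ t) (hB : IsCFFOn r w S B) : Ncff r w 1 t ≤ #S := by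
  unfold Ncff
  split_ifs
  · exact (hB.nonempty h).card_pos
  · obtain ⟨B', hB'⟩ := hB.exists_isCFF
    exact Nat.sInf_le ⟨B', hB'⟩

lemma isCFFOn_mem (r w t : ℕ) :
    IsCFFOn r w (univ : Finset (Finset (Fin t))) fun i => univ.filter (i ∈ ·) := by
  intro L M hLM _ _
  exact ⟨L, mem_univ _, by simp, fun j hj => by simpa using disjoint_right.1 hLM hj⟩

lemma exists_isCFFOn_Ncff (hr : r ≠ 0) (hw : w ≠ 0) :
    ∃ B : Fin t → Finset (Fin (Ncff r w 1 t)), IsCFFOn r w univ B := by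
  obtain ⟨B, hB⟩ := (isCFFOn_mem r w t).exists_isCFF
  have hN : Ncff r w 1 t = sInf {n | ∃ B : Fin t → Finset (Fin n), IsCFF r w 1 n t B} :=
    if_neg (not_or.2 ⟨hr, hw⟩)
  obtain ⟨B', hB'⟩ :
      Ncff r w 1 t ∈ {n | ∃ B : Fin t → Finset (Fin n), IsCFF r w 1 n t B} :=
    hN ▸ Nat.sInf_mem ⟨_, B, hB⟩
  exact ⟨B', isCFF_one_iff.1 hB'⟩

lemma IsCFFOn.compl [Fintype α] [DecidableEq α] (hB : IsCFFOn r w S B) :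
    IsCFFOn w r S fun i => (B i)ᶜ := by
  intro L M hLM hL hM
  obtain ⟨x, hx, hxM, hxL⟩ := hB M L hLM.symm hM hL
  exact ⟨x, hx, fun i hi => mem_compl.2 (hxL i hi),
    fun j hj => not_not.2 (hxM j hj) ∘ mem_compl.1⟩

lemma Ncff_comm_le (hr : r ≠ 0) (hw : w ≠ 0) (h : r + w ≤ t) :
    Ncff w r 1 t ≤ Ncff r w 1 t := by
  obtain ⟨B, hB⟩ := exists_isCFFOn_Ncff (t := t) hr hw
  simpa using Ncff_le_card (by omega) hB.compl

lemma last_notMem_map_castSuccEmb (L : Finset (Fin t)) : Fin.last t ∉ L.map Fin.castSuccEmb := by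
  simp [Fin.castSucc_ne_last]

lemma IsCFFOn.restrict_mem_last [DecidableEq α] {B : Fin (t + 1) → Finset α}
    (hB : IsCFFOn (r + 1) w S B) :
    IsCFFOn r w (S.filter (· ∈ B (Fin.last t))) fun i => B i.castSucc := by
  intro L M hLM hL hM
  obtain ⟨x, hx, hxL, hxM⟩ :=
    hB (insert (Fin.last t) (L.map Fin.castSuccEmb)) (M.map Fin.castSuccEmb)
    (disjoint_insert_left.2 ⟨last_notMem_map_castSuccEmb M, disjoint_map _ |>.2 hLM⟩)
    (by rw [card_insert_of_notMem (last_notMem_map_castSuccEmb L), card_map, hL])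
    (by rw [card_map, hM])
  refine ⟨x, mem_filter.2 ⟨hx, hxL _ (mem_insert_self _ _)⟩, fun i hi => ?_, fun j hj => ?_⟩
  · exact hxL _ (mem_insert_of_mem (mem_map_of_mem _ hi))
  · exact hxM _ (mem_map_of_mem _ hj)

lemma IsCFFOn.restrict_notMem_last [DecidableEq α] {B : Fin (t + 1) → Finset α}
    (hB : IsCFFOn r (w + 1) S B) :
    IsCFFOn r w (S.filter (· ∉ B (Fin.last t))) fun i => B i.castSucc := by
  intro L M hLM hL hM
  obtain ⟨x, hx, hxL, hxM⟩ :=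
    hB (L.map Fin.castSuccEmb) (insert (Fin.last t) (M.map Fin.castSuccEmb))
    (disjoint_insert_right.2 ⟨last_notMem_map_castSuccEmb L, disjoint_map _ |>.2 hLM⟩)
    (by rw [card_map, hL])
    (by rw [card_insert_of_notMem (last_notMem_map_castSuccEmb M), card_map, hM])
  refine ⟨x, mem_filter.2 ⟨hx, hxM _ (mem_insert_self _ _)⟩, fun i hi => ?_, fun j hj => ?_⟩
  · exact hxL _ (mem_map_of_mem _ hi)
  · exact hxM _ (mem_insert_of_mem (mem_map_of_mem _ hj))

end

lemma Ncff_add_le_Ncff_succ {r w t : ℕ} (h : r + w + 1 ≤ t) :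
    Ncff r (w + 1) 1 t + Ncff (r + 1) w 1 t ≤ Ncff (r + 1) (w + 1) 1 (t + 1) := by
  obtain ⟨B, hB⟩ := exists_isCFFOn_Ncff (t := t + 1) r.succ_ne_zero w.succ_ne_zero
  calc _ ≤ #(univ.filter (· ∈ B (Fin.last t))) + #(univ.filter (· ∉ B (Fin.last t))) :=
        add_le_add (Ncff_le_card (by omega) hB.restrict_mem_last)
          (Ncff_le_card (by omega) hB.restrict_notMem_last)
    _ = _ := by rw [card_filter_add_card_filter_not, card_univ, Fintype.card_fin]

lemma two_mul_Ncff_le_Ncff_succ {r t : ℕ} (hr : r ≠ 0) (h : 2 * r + 1 ≤ t) :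
    2 * Ncff (r + 1) r 1 t ≤ Ncff (r + 1) (r + 1) 1 (t + 1) :=
  calc 2 * Ncff (r + 1) r 1 t ≤ Ncff r (r + 1) 1 t + Ncff (r + 1) r 1 t := by
        rw [two_mul]
        exact Nat.add_le_add_right (Ncff_comm_le (t := t) hr r.succ_ne_zero (by omega)) _
    _ ≤ _ := Ncff_add_le_Ncff_succ (by omega)

/-- The bound of `cff_ge_21_bound` with `r = a + 2`, `w = b + 1`; its last term
`C(r+w-3, w) = C(r+w-3, r-3)` vanishes for `r = 2` without a case split. -/
def cffBound (A a b : ℕ) : ℕ :=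
  (a + b + 1).choose (a + 1) * A + (a + b).choose (a + 2) + (a + b).choose (b + 1)

section
variable (A : ℕ)

lemma cffBound_zero_zero : cffBound A 0 0 = A := by simp [cffBound]

lemma cffBound_succ_zero (a : ℕ) : cffBound A (a + 1) 0 = cffBound A a 0 + 1 := by
  simp [cffBound, Nat.choose_eq_zero_of_lt, add_assoc, add_comm 1]

lemma cffBound_succ_succ (a b : ℕ) :
    cffBound A (a + 1) (b + 1) = cffBound A a (b + 1) + cffBound A (a + 1) b := by
  have e₁ : a + 1 + (b + 1) = a + (b + 1) + 1 := by omega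
  have e₂ : a + (b + 1) = a + 1 + b := by omega
  simp only [cffBound, e₁, Nat.choose_succ_succ']
  rw [e₂]; ring

lemma cffBound_self_succ (a : ℕ) : cffBound A a (a + 1) = 2 * cffBound A a a := by
  have e₁ : a + (a + 1) + 1 = 2 * a + 1 + 1 := by omega
  have e₂ : a + (a + 1) = 2 * a + 1 := by omega
  have e₃ : a + a = 2 * a := by omega
  rw [cffBound, cffBound, e₁, e₂, e₃, Nat.choose_succ_succ' (2 * a + 1) a,
    ← Nat.choose_symm_half, Nat.choose_succ_succ' (2 * a) (a + 1)]
  ring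
end

lemma Ncff_zero_right (r d t : ℕ) : Ncff r 0 d t = 1 := if_pos (Or.inr rfl)

theorem cffBound_le_Ncff (s : ℕ) :
    ∀ a b t, b ≤ a + 1 → a + b + s + 3 = t →
      cffBound (Ncff 2 1 1 (s + 3)) a b ≤ Ncff (a + 2) (b + 1) 1 t
  | _, _, 0, _, ht => by omega
  | 0, 0, t + 1, _, ht => by
    rw [cffBound_zero_zero, show t + 1 = s + 3 by omega]
  | a + 1, 0, t + 1, _, ht =>
    calc cffBound _ (a + 1) 0 = cffBound _ a 0 + Ncff (a + 3) 0 1 t := by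
          rw [cffBound_succ_zero, Ncff_zero_right]
      _ ≤ Ncff (a + 2) 1 1 t + Ncff (a + 3) 0 1 t :=
          Nat.add_le_add_right (cffBound_le_Ncff s a 0 t (by omega) (by omega)) _
      _ ≤ Ncff (a + 3) 1 1 (t + 1) := Ncff_add_le_Ncff_succ (by omega)
  | a, b + 1, t + 1, hb, ht => by
    obtain rfl | hba := eq_or_ne b a
    · calc cffBound _ b (b + 1) = 2 * cffBound _ b b := cffBound_self_succ _ _
        _ ≤ 2 * Ncff (b + 2) (b + 1) 1 t :=
            Nat.mul_le_mul_left 2 (cffBound_le_Ncff s b b t (by omega) (by omega))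
        _ ≤ Ncff (b + 2) (b + 2) 1 (t + 1) := two_mul_Ncff_le_Ncff_succ b.succ_ne_zero (by omega)
    · obtain ⟨c, rfl⟩ : ∃ c, a = c + 1 := ⟨a - 1, by omega⟩
      calc cffBound _ (c + 1) (b + 1) = cffBound _ c (b + 1) + cffBound _ (c + 1) b :=
            cffBound_succ_succ _ _ _
        _ ≤ Ncff (c + 2) (b + 2) 1 t + Ncff (c + 3) (b + 1) 1 t :=
            add_le_add (cffBound_le_Ncff s c (b + 1) t (by omega) (by omega))
              (cffBound_le_Ncff s (c + 1) b t (by omega) (by omega))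
        _ ≤ Ncff (c + 3) (b + 2) 1 (t + 1) := Ncff_add_le_Ncff_succ (by omega)
termination_by a b => a + b

/-- For positive integers `r, w, t` with `r ≥ 2`, `w ≤ r` and `t ≥ r + w`,
`N((r,w),t) ≥ C(r+w−2, r−1)·N((2,1), t−r−w+3) + C(r+w−3, r) + C(r+w−3, r−3)`
(the last binomial coefficient being 0 when `r < 3`). -/
theorem cff_ge_21_bound (r w t : ℕ) (hr : 2 ≤ r) (hw : 0 < w) (hwr : w ≤ r)
    (ht : r + w ≤ t) :
    (r + w - 2).choose (r - 1) * Ncff 2 1 1 (t - r - w + 3)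
        + (r + w - 3).choose r
        + (if 3 ≤ r then (r + w - 3).choose (r - 3) else 0)
      ≤ Ncff r w 1 t := by
  obtain ⟨a, rfl⟩ : ∃ a, r = a + 2 := ⟨r - 2, by omega⟩
  obtain ⟨b, rfl⟩ : ∃ b, w = b + 1 := ⟨w - 1, by omega⟩
  have e₁ : a + 2 + (b + 1) - 2 = a + b + 1 := by omega
  have e₂ : a + 2 + (b + 1) - 3 = a + b := by omega
  have hlast :
      (if 3 ≤ a + 2 then (a + b).choose (a + 2 - 3) else 0) = (a + b).choose (b + 1) := by
    rcases a with _ | a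
    · simp [Nat.choose_succ_self]
    · rw [if_pos (by omega)]
      exact Nat.choose_symm_of_eq_add (by omega)
  calc _ = cffBound (Ncff 2 1 1 (t - (a + 2) - (b + 1) + 3)) a b := by
        rw [e₁, e₂, hlast, cffBound, Nat.add_succ_sub_one]
    _ ≤ _ := cffBound_le_Ncff _ a b t (by omega) (by omega)
end

section
/- Let r, w, t, d, d₀ be positive integers with w ≤ r and t ≥ r + w, and suppose d satisfies d · |E(I_t(r,w))| = B(I_t(r,w)) · t!. Then N((r,w; d₀·d), t) = d₀ · t!. -/
/-- The bi-intersection graph `I_t(r,w)`: a bipartite graph whose left vertices are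
the `r`-subsets of `[t]` and right vertices are the `w`-subsets of `[t]`, with an
`r`-subset adjacent to a `w`-subset iff they are disjoint. -/
def biIntGraph (t r w : ℕ) : SimpleGraph (Finset (Fin t) ⊕ Finset (Fin t)) :=
  SimpleGraph.fromRel (fun a b =>
    ∃ A B : Finset (Fin t), a = Sum.inl A ∧ b = Sum.inr B ∧
      A.card = r ∧ B.card = w ∧ Disjoint A B)

/-- `maxBicliqueEdges G` = `B(G)`, the maximum number of edges among the bicliques
of `G`. -/
noncomputable def maxBicliqueEdges {V : Type*} (G : SimpleGraph V) : ℕ :=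
  sSup {m : ℕ | ∃ X Y : Finset V, Disjoint X Y ∧ (∀ x ∈ X, ∀ y ∈ Y, G.Adj x y) ∧
    m = X.card * Y.card}

/-!
A point `x` of an `(r,w;D)`-CFF witnesses the pair `(L, M)` exactly when `L` lies inside, and `M`
outside, the set `V` of blocks containing `x`; these pairs form the biclique
`(r-subsets of V) × (w-subsets of Vᶜ)` of `I_t(r,w)`. Double counting point–edge incidences gives
`D·|E| ≤ n·B`, i.e. `n ≥ d₀·t!`.

Conversely, every biclique of `I_t(r,w)` sits inside one of this form, so `B` is attained by
some `U`. Take as points `d₀` copies of the permutations `π` of `[t]`, with `π` in block `i` iff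
`π i ∈ U`. This family is invariant under `S_t`, which acts transitively on the edges, so every
edge is witnessed by the same number `d₀·t!·B/|E| = d₀·d` of points.
-/

open Finset

section SetSystem

variable {ι α : Type*} [Fintype ι] [DecidableEq ι] [Fintype α] [DecidableEq α]

def disjointPairs (ι : Type*) [Fintype ι] [DecidableEq ι] (r w : ℕ) :
    Finset (Finset ι × Finset ι) :=
  {p | #p.1 = r ∧ #p.2 = w ∧ Disjoint p.1 p.2}

lemma mem_disjointPairs {r w : ℕ} {p : Finset ι × Finset ι} :
    p ∈ disjointPairs ι r w ↔ #p.1 = r ∧ #p.2 = w ∧ Disjoint p.1 p.2 := by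
  simp [disjointPairs]

omit [Fintype ι] [DecidableEq ι] in
lemma mem_inf_sdiff_sup_iff (B : ι → Finset α) (L M : Finset ι) (x : α) :
    x ∈ L.inf B \ M.sup B ↔ (∀ i ∈ L, x ∈ B i) ∧ ∀ i ∈ M, x ∉ B i := by
  simp [mem_inf, mem_sup]

lemma filter_disjointPairs_eq_powersetCard_product (r w : ℕ) (V : Finset ι) :
    {p ∈ disjointPairs ι r w | p.1 ⊆ V ∧ p.2 ⊆ Vᶜ} = powersetCard r V ×ˢ powersetCard w Vᶜ := by
  ext ⟨L, M⟩
  simp only [disjointPairs, mem_filter, mem_univ, true_and, mem_product, mem_powersetCard]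
  constructor
  · rintro ⟨⟨hL, hM, -⟩, hLV, hMV⟩
    exact ⟨⟨hLV, hL⟩, hMV, hM⟩
  · rintro ⟨⟨hLV, hL⟩, hMV, hM⟩
    exact ⟨⟨hL, hM, disjoint_compl_right.mono hLV hMV⟩, hLV, hMV⟩

lemma sum_card_inf_sdiff_sup (r w : ℕ) (B : ι → Finset α) :
    ∑ p ∈ disjointPairs ι r w, #(p.1.inf B \ p.2.sup B) =
      ∑ x : α, (#{i | x ∈ B i}).choose r * (Fintype.card ι - #{i | x ∈ B i}).choose w := by
  have h := sum_card_bipartiteAbove_eq_sum_card_bipartiteBelow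
    (fun (p : Finset ι × Finset ι) x => x ∈ p.1.inf B \ p.2.sup B)
    (s := disjointPairs ι r w) (t := univ)
  refine (Eq.trans ?_ h).trans (sum_congr rfl fun x _ => ?_)
  · simp only [bipartiteAbove, filter_mem_eq_inter, univ_inter]
  · rw [← card_compl, ← card_powersetCard, ← card_powersetCard, ← card_product,
      ← filter_disjointPairs_eq_powersetCard_product]
    congr 1
    ext p
    simp only [bipartiteBelow, mem_filter, mem_inf_sdiff_sup_iff, subset_iff, mem_compl, mem_univ,
      true_and]

lemma exists_perm_map_eq {L M L' M' : Finset ι} (h : Disjoint L M) (h' : Disjoint L' M')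
    (hL : #L = #L') (hM : #M = #M') :
    ∃ σ : Equiv.Perm ι, L.map σ.toEmbedding = L' ∧ M.map σ.toEmbedding = M' := by
  let f (S T : Finset ι) (i : ι) : Bool × Bool := (decide (i ∈ S), decide (i ∈ T))
  have hfib : ∀ c, Fintype.card {i // f L M i = c} = Fintype.card {i // f L' M' i = c} := by
    -- the four fibres of `f L M` are `L ∩ M = ∅`, `L`, `M` and `(L ∪ M)ᶜ`
    rintro ⟨_ | _, _ | _⟩ <;>
      simp [Fintype.card_subtype, f, filter_and, filter_not, ← compl_eq_univ_sdiff, ← compl_union,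
        card_compl, card_union_of_disjoint, disjoint_iff_inter_eq_empty.1, h, h', hL, hM,
        inter_eq_left.2 (subset_compl_iff_disjoint_right.2 h),
        inter_eq_left.2 (subset_compl_iff_disjoint_right.2 h'),
        inter_eq_right.2 (subset_compl_iff_disjoint_left.2 h),
        inter_eq_right.2 (subset_compl_iff_disjoint_left.2 h')]
  let σ := Equiv.ofFiberEquiv fun c => Fintype.equivOfCardEq (hfib c)
  have hσ (i : ι) : f L' M' (σ i) = f L M i := Equiv.ofFiberEquiv_map _ i
  refine ⟨σ, ?_, ?_⟩ <;> ext j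
  · simpa [f, iff_comm] using congrArg Prod.fst (hσ (σ.symm j))
  · simpa [f, iff_comm] using congrArg Prod.snd (hσ (σ.symm j))

variable {κ : Type*}

def permBlocks (e : α ≃ κ × Equiv.Perm ι) (U : Finset ι) (i : ι) : Finset α :=
  {x | (e x).2 i ∈ U}

variable (e : α ≃ κ × Equiv.Perm ι) (U : Finset ι)

lemma card_filter_mem_permBlocks (x : α) : #{i | x ∈ permBlocks e U i} = #U := by
  have : ({i | x ∈ permBlocks e U i} : Finset ι) = U.map (e x).2.symm.toEmbedding := by
    ext i
    simp [permBlocks, mem_map_equiv]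
  rw [this, card_map]

omit [Fintype ι] in
lemma card_inf_sdiff_sup_permBlocks_map (σ : Equiv.Perm ι) (L M : Finset ι) :
    #((L.map σ.toEmbedding).inf (permBlocks e U) \ (M.map σ.toEmbedding).sup (permBlocks e U)) =
      #(L.inf (permBlocks e U) \ M.sup (permBlocks e U)) := by
  refine card_equiv (e.trans <| ((Equiv.refl κ).prodCongr (Equiv.mulRight σ)).trans e.symm)
    fun x => ?_
  simp only [mem_inf_sdiff_sup_iff, forall_mem_map]
  simp [permBlocks]

lemma card_inf_sdiff_sup_permBlocks_eq {p q : Finset ι × Finset ι} {r w : ℕ}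
    (hp : p ∈ disjointPairs ι r w) (hq : q ∈ disjointPairs ι r w) :
    #(p.1.inf (permBlocks e U) \ p.2.sup (permBlocks e U)) =
      #(q.1.inf (permBlocks e U) \ q.2.sup (permBlocks e U)) := by
  rw [mem_disjointPairs] at hp hq
  obtain ⟨σ, hL, hM⟩ := exists_perm_map_eq hp.2.2 hq.2.2 (hp.1.trans hq.1.symm)
    (hp.2.1.trans hq.2.1.symm)
  rw [← hL, ← hM, card_inf_sdiff_sup_permBlocks_map]

lemma card_inf_sdiff_sup_permBlocks_mul_card_disjointPairs {r w : ℕ} {p : Finset ι × Finset ι}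
    (hp : p ∈ disjointPairs ι r w) :
    #(p.1.inf (permBlocks e U) \ p.2.sup (permBlocks e U)) * #(disjointPairs ι r w) =
      Fintype.card α * ((#U).choose r * (Fintype.card ι - #U).choose w) := by
  calc _ = ∑ q ∈ disjointPairs ι r w, #(q.1.inf (permBlocks e U) \ q.2.sup (permBlocks e U)) := by
        rw [sum_congr rfl fun q hq => card_inf_sdiff_sup_permBlocks_eq e U hq hp, sum_const,
          smul_eq_mul, mul_comm]
    _ = _ := by simp [sum_card_inf_sdiff_sup, card_filter_mem_permBlocks]

lemma exists_card_mul_card_le_choose_mul_choose {r w : ℕ} {𝒜 ℬ : Finset (Finset ι)}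
    (h : ∀ A ∈ 𝒜, ∀ B ∈ ℬ, #A = r ∧ #B = w ∧ Disjoint A B) :
    ∃ V : Finset ι, #𝒜 * #ℬ ≤ (#V).choose r * (Fintype.card ι - #V).choose w := by
  obtain rfl | ⟨A₀, hA₀⟩ := 𝒜.eq_empty_or_nonempty
  · exact ⟨∅, by simp⟩
  obtain rfl | ⟨B₀, hB₀⟩ := ℬ.eq_empty_or_nonempty
  · exact ⟨∅, by simp⟩
  refine ⟨𝒜.sup id, Nat.mul_le_mul ?_ ?_⟩
  · rw [← card_powersetCard]
    exact card_le_card fun A hA => mem_powersetCard.2 ⟨le_sup (f := id) hA, (h A hA B₀ hB₀).1⟩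
  · rw [← card_compl, ← card_powersetCard]
    refine card_le_card fun B hB => mem_powersetCard.2 ⟨?_, (h A₀ hA₀ B hB).2.1⟩
    exact subset_compl_iff_disjoint_left.2 <|
      Finset.disjoint_sup_left.2 fun A hA => (h A hA B hB).2.2

end SetSystem

section BicliqueEdges

variable {V : Type*} [Fintype V] (G : SimpleGraph V)

lemma bddAbove_bicliqueEdges : BddAbove {m : ℕ | ∃ X Y : Finset V, Disjoint X Y ∧
    (∀ x ∈ X, ∀ y ∈ Y, G.Adj x y) ∧ m = X.card * Y.card} := by
  refine ⟨Fintype.card V * Fintype.card V, ?_⟩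
  rintro m ⟨X, Y, -, -, rfl⟩
  exact Nat.mul_le_mul (card_le_univ X) (card_le_univ Y)

lemma card_mul_card_le_maxBicliqueEdges {X Y : Finset V} (hXY : Disjoint X Y)
    (hadj : ∀ x ∈ X, ∀ y ∈ Y, G.Adj x y) : #X * #Y ≤ maxBicliqueEdges G :=
  le_csSup (bddAbove_bicliqueEdges G) ⟨X, Y, hXY, hadj, rfl⟩

lemma exists_maxBicliqueEdges_eq : ∃ X Y : Finset V, (∀ x ∈ X, ∀ y ∈ Y, G.Adj x y) ∧
    maxBicliqueEdges G = #X * #Y := by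
  obtain ⟨X, Y, -, hadj, h⟩ :=
    Nat.sSup_mem (by exact ⟨0, ∅, ∅, by simp⟩) (bddAbove_bicliqueEdges G)
  exact ⟨X, Y, hadj, h⟩

end BicliqueEdges

section BiIntGraph

variable {t r w : ℕ}

@[simp]
lemma biIntGraph_adj_inl_inr {A B : Finset (Fin t)} :
    (biIntGraph t r w).Adj (.inl A) (.inr B) ↔ #A = r ∧ #B = w ∧ Disjoint A B := by
  simp [biIntGraph]

@[simp]
lemma biIntGraph_adj_inr_inl {A B : Finset (Fin t)} :
    (biIntGraph t r w).Adj (.inr B) (.inl A) ↔ #A = r ∧ #B = w ∧ Disjoint A B := by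
  simp [biIntGraph]

@[simp]
lemma biIntGraph_not_adj_inl_inl {A A' : Finset (Fin t)} :
    ¬(biIntGraph t r w).Adj (.inl A) (.inl A') := by
  simp [biIntGraph]

@[simp]
lemma biIntGraph_not_adj_inr_inr {B B' : Finset (Fin t)} :
    ¬(biIntGraph t r w).Adj (.inr B) (.inr B') := by
  simp [biIntGraph]

lemma card_edgeSet_biIntGraph :
    Nat.card (biIntGraph t r w).edgeSet = #(disjointPairs (Fin t) r w) := by
  have : (biIntGraph t r w).edgeSet = (fun p : Finset (Fin t) × Finset (Fin t) =>
      s(.inl p.1, .inr p.2)) '' disjointPairs (Fin t) r w := by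
    ext e
    induction e using Sym2.ind with
    | _ a b => cases a <;> cases b <;> simp [mem_disjointPairs, and_comm, or_comm]
  rw [this, Nat.card_coe_set_eq, Set.ncard_image_of_injective _ ?_, Set.ncard_coe_finset]
  rintro ⟨A, B⟩ ⟨A', B'⟩ h
  simpa using h

lemma exists_card_mul_card_le_of_biclique {X Y : Finset (Finset (Fin t) ⊕ Finset (Fin t))}
    (hXY : ∀ x ∈ X, ∀ y ∈ Y, (biIntGraph t r w).Adj x y) :
    ∃ V : Finset (Fin t), #X * #Y ≤ (#V).choose r * (t - #V).choose w := by
  obtain rfl | ⟨x₀, hx₀⟩ := X.eq_empty_or_nonempty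
  · exact ⟨∅, by simp⟩
  obtain rfl | ⟨y₀, hy₀⟩ := Y.eq_empty_or_nonempty
  · exact ⟨∅, by simp⟩
  wlog hx₀l : x₀.isLeft generalizing X Y x₀ y₀
  · have hy₀l : y₀.isLeft := by
      have := hXY x₀ hx₀ y₀ hy₀
      cases x₀ <;> cases y₀ <;> simp_all
    simpa only [mul_comm] using this (fun y hy x hx => (hXY x hx y hy).symm) y₀ hy₀ x₀ hx₀ hy₀l
  obtain ⟨A₀, rfl⟩ : ∃ A₀, x₀ = .inl A₀ := by cases x₀ <;> simp_all
  obtain ⟨B₀, rfl⟩ : ∃ B₀, y₀ = .inr B₀ := by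
    have := hXY _ hx₀ y₀ hy₀
    cases y₀ <;> simp_all
  have hX : X.toRight = ∅ :=
    eq_empty_of_forall_notMem fun B hB => by simpa using hXY _ (mem_toRight.1 hB) _ hy₀
  have hY : Y.toLeft = ∅ :=
    eq_empty_of_forall_notMem fun A hA => by simpa using hXY _ hx₀ _ (mem_toLeft.1 hA)
  obtain ⟨V, hV⟩ := exists_card_mul_card_le_choose_mul_choose (ι := Fin t) (r := r) (w := w)
    (𝒜 := X.toLeft) (ℬ := Y.toRight)
    fun A hA B hB => biIntGraph_adj_inl_inr.1 (hXY _ (mem_toLeft.1 hA) _ (mem_toRight.1 hB))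
  refine ⟨V, ?_⟩
  rw [← card_toLeft_add_card_toRight (u := X), ← card_toLeft_add_card_toRight (u := Y)]
  simpa [hX, hY] using hV

lemma choose_mul_choose_le_maxBicliqueEdges (V : Finset (Fin t)) :
    (#V).choose r * (t - #V).choose w ≤ maxBicliqueEdges (biIntGraph t r w) := by
  have h := card_mul_card_le_maxBicliqueEdges (biIntGraph t r w)
    (X := (powersetCard r V).map .inl) (Y := (powersetCard w Vᶜ).map .inr)
    (disjoint_map_inl_map_inr _ _) ?_
  · simpa [card_compl] using h
  simp only [mem_map, mem_powersetCard]
  rintro _ ⟨A, ⟨hAV, hA⟩, rfl⟩ _ ⟨B, ⟨hBV, hB⟩, rfl⟩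
  exact biIntGraph_adj_inl_inr.2 ⟨hA, hB, disjoint_compl_right.mono hAV hBV⟩

lemma exists_maxBicliqueEdges_biIntGraph_eq : ∃ V : Finset (Fin t),
    maxBicliqueEdges (biIntGraph t r w) = (#V).choose r * (t - #V).choose w := by
  obtain ⟨X, Y, hXY, hmax⟩ := exists_maxBicliqueEdges_eq (biIntGraph t r w)
  obtain ⟨V, hV⟩ := exists_card_mul_card_le_of_biclique hXY
  exact ⟨V, (hmax.trans_le hV).antisymm (choose_mul_choose_le_maxBicliqueEdges V)⟩

lemma maxBicliqueEdges_biIntGraph_pos (ht : r + w ≤ t) :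
    0 < maxBicliqueEdges (biIntGraph t r w) := by
  obtain ⟨V, -, hV⟩ := exists_subset_card_eq (s := (univ : Finset (Fin t))) (n := r)
    (by simp; omega)
  refine (Nat.mul_pos ?_ ?_).trans_le (choose_mul_choose_le_maxBicliqueEdges (w := w) V)
  · exact Nat.choose_pos hV.ge
  · exact Nat.choose_pos (by omega)

lemma mul_card_disjointPairs_le_of_isCFF {D n : ℕ} {B : Fin t → Finset (Fin n)}
    (hB : IsCFF r w D n t B) :
    D * #(disjointPairs (Fin t) r w) ≤ n * maxBicliqueEdges (biIntGraph t r w) :=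
  calc D * #(disjointPairs (Fin t) r w) = ∑ _p ∈ disjointPairs (Fin t) r w, D := by
        rw [sum_const, smul_eq_mul, mul_comm]
    _ ≤ ∑ p ∈ disjointPairs (Fin t) r w, #(p.1.inf B \ p.2.sup B) := by
        refine sum_le_sum fun p hp => ?_
        obtain ⟨hL, hM, hLM⟩ := mem_disjointPairs.1 hp
        exact hB _ _ hLM hL hM
    _ = ∑ x : Fin n, (#{i | x ∈ B i}).choose r * (t - #{i | x ∈ B i}).choose w := by
        simpa using sum_card_inf_sdiff_sup r w B
    _ ≤ ∑ _x : Fin n, maxBicliqueEdges (biIntGraph t r w) :=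
        sum_le_sum fun x _ => choose_mul_choose_le_maxBicliqueEdges _
    _ = n * maxBicliqueEdges (biIntGraph t r w) := by simp

end BiIntGraph

theorem cff_exact_value_general (r w t d d₀ : ℕ) (hw : 0 < w) (hwr : w ≤ r) (ht : r + w ≤ t)
    (hdef : d * Nat.card (biIntGraph t r w).edgeSet
        = maxBicliqueEdges (biIntGraph t r w) * t.factorial) :
    Ncff r w (d₀ * d) t = d₀ * t.factorial := by
  rw [card_edgeSet_biIntGraph] at hdef
  have hmax := maxBicliqueEdges_biIntGraph_pos (w := w) ht
  have hpairs : 0 < #(disjointPairs (Fin t) r w) :=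
    Nat.pos_of_mul_pos_left (hdef ▸ Nat.mul_pos hmax t.factorial_pos)
  obtain ⟨U, hU⟩ := exists_maxBicliqueEdges_biIntGraph_eq (t := t) (r := r) (w := w)
  let e : Fin (d₀ * t.factorial) ≃ Fin d₀ × Equiv.Perm (Fin t) :=
    Fintype.equivOfCardEq (by simp [Fintype.card_perm])
  have hCFF : IsCFF r w (d₀ * d) _ t (permBlocks e U) := fun L M hLM hL hM => by
    refine (Nat.eq_of_mul_eq_mul_right hpairs ?_).ge
    rw [card_inf_sdiff_sup_permBlocks_mul_card_disjointPairs e U (p := (L, M))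
      (mem_disjointPairs.2 ⟨hL, hM, hLM⟩), Fintype.card_fin, Fintype.card_fin, ← hU,
      mul_assoc d₀ d, hdef]
    ring
  rw [Ncff, if_neg (by omega)]
  refine le_antisymm (Nat.sInf_le ⟨_, hCFF⟩) (le_csInf ⟨_, _, hCFF⟩ fun n ⟨B, hB⟩ => ?_)
  have hlower := mul_card_disjointPairs_le_of_isCFF hB
  rw [mul_assoc, hdef] at hlower
  exact Nat.le_of_mul_le_mul_right (by linarith) hmax

/-- For positive integers `r, w, t, d, d₀` with `w ≤ r`, `t ≥ r + w` and
`d = B(I_t(r,w))·t! / |E(I_t(r,w))|`, we have `N((r,w; d₀·d), t) = d₀·t!`. -/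
theorem cff_exact_value (r w t d d₀ : ℕ) (hw : 0 < w) (hwr : w ≤ r) (ht : r + w ≤ t)
    (hd : 0 < d) (hd₀ : 0 < d₀)
    (hdef : d * Nat.card (biIntGraph t r w).edgeSet
        = maxBicliqueEdges (biIntGraph t r w) * t.factorial) :
    Ncff r w (d₀ * d) t = d₀ * t.factorial :=
  cff_exact_value_general r w t d d₀ hw hwr ht hdef
end
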